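/- For every integer n ≥ 1 and all reals s, r, the polynomial identity Σ_{i=1}^n (c_i/2^{2n+1}) (s−r)^{2i+1} (s+r)^{2(n−i)} = (s^{2n+1} − r^{2n+1}) Σ_{i=1}^n c_i/2^{2n+1} + (r^{2n} s − r s^{2n}) Σ_{i=1}^n (c_i/2^{2n+1})(4i−2n+1) holds; in particular all monomials in which both s and r appear with exponent strictly between 1 and 2n cancel. -/

import Mathlib

/-!
With `x = (s - r) / 2` and `q = (s + r) / 2` the left side is `∑ c_i x^(2i+1) q^(2(n-i))`.
Splitting the binomial expansions of `(q ± x)^N` into even and odd parts, and expressing the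
neighbours `C(2n+1, 2i+1)` and `C(2n, 2i)` through `C(2n, 2i+1)`, gives
`c_i = 2α C(2n+1, 2i+1) + 2β (C(2n, 2i) - C(2n, 2i+1))` with `α = 3/(8n(2n+1))`,
`β = 3/(8n(2n-1))`, i.e. the left side is `α (s^(2n+1) - r^(2n+1)) + β (r^(2n) s - r s^(2n))`.
At `s = 1` the two sums of the statement are read off this identity: the value at `r = 0` is `α`,
and minus the derivative in `r` at `r = 0` is `β`.
-/

/-- Coefficients `c_i = (3i/((n−i)(2n)(2n−1)))·C(2n,2i+1)` for `i = 1,…,n−1` and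
`c_n = 3/((2n+1)(2n−1))`. -/
noncomputable def cCoef (n i : ℕ) : ℝ :=
  if i = n then 3 / ((2 * (n : ℝ) + 1) * (2 * (n : ℝ) - 1))
  else (3 * (i : ℝ) / (((n : ℝ) - (i : ℝ)) * (2 * (n : ℝ)) * (2 * (n : ℝ) - 1))) *
    (Nat.choose (2 * n) (2 * i + 1) : ℝ)

open Finset

theorem Finset.sum_range_two_mul {M : Type*} [AddCommMonoid M] (f : ℕ → M) (m : ℕ) :
    ∑ j ∈ range (2 * m), f j = ∑ i ∈ range m, (f (2 * i) + f (2 * i + 1)) := by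
  induction m with
  | zero => simp
  | succ m ih => rw [mul_add_one, sum_range_succ, sum_range_succ, sum_range_succ, ih, add_assoc]

theorem add_pow_eq_sum_range_even_add_odd {R : Type*} [CommSemiring R] (x q : R) {N m : ℕ}
    (hN : N ≤ 2 * m + 1) :
    (q + x) ^ N = ∑ i ∈ range (m + 1),
      (x ^ (2 * i) * q ^ (N - 2 * i) * N.choose (2 * i) +
        x ^ (2 * i + 1) * q ^ (N - (2 * i + 1)) * N.choose (2 * i + 1)) := by
  rw [← sum_range_two_mul fun j ↦ x ^ j * q ^ (N - j) * (N.choose j : R), add_comm, add_pow]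
  refine sum_subset (range_subset_range.2 (by omega)) fun j _ hj ↦ ?_
  rw [Nat.choose_eq_zero_of_lt (by simpa using hj), Nat.cast_zero, mul_zero]

section ParitySplit

variable {R : Type*} [CommRing R] (x q : R) {N m : ℕ}

theorem add_pow_add_sub_pow (hN : N ≤ 2 * m + 1) :
    (q + x) ^ N + (q - x) ^ N =
      2 * ∑ i ∈ range (m + 1), x ^ (2 * i) * q ^ (N - 2 * i) * N.choose (2 * i) := by
  rw [sub_eq_add_neg, add_pow_eq_sum_range_even_add_odd x q hN,
    add_pow_eq_sum_range_even_add_odd (-x) q hN, ← sum_add_distrib, mul_sum]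
  refine sum_congr rfl fun i _ ↦ ?_
  rw [(even_two_mul i).neg_pow, (odd_two_mul_add_one i).neg_pow]
  ring

theorem add_pow_sub_sub_pow (hN : N ≤ 2 * m + 1) :
    (q + x) ^ N - (q - x) ^ N =
      2 * ∑ i ∈ range (m + 1), x ^ (2 * i + 1) * q ^ (N - (2 * i + 1)) * N.choose (2 * i + 1) := by
  rw [sub_eq_add_neg q x, add_pow_eq_sum_range_even_add_odd x q hN,
    add_pow_eq_sum_range_even_add_odd (-x) q hN, ← sum_sub_distrib, mul_sum]
  refine sum_congr rfl fun i _ ↦ ?_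
  rw [(even_two_mul i).neg_pow, (odd_two_mul_add_one i).neg_pow]
  ring

end ParitySplit

theorem hasDerivAt_one_sub_pow_mul_one_add_pow (a b : ℕ) :
    HasDerivAt (fun r : ℝ ↦ (1 - r) ^ a * (1 + r) ^ b) (b - a) 0 := by
  refine ((((hasDerivAt_id' (0 : ℝ)).const_sub 1).fun_pow a).mul
    (((hasDerivAt_id' (0 : ℝ)).const_add 1).fun_pow b)).congr_deriv ?_
  simp only [sub_zero, add_zero, one_pow]
  ring

namespace cCoef

variable {n : ℕ}

theorem zero_right (hn : n ≠ 0) : cCoef n 0 = 0 := by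
  simp [cCoef, Ne.symm hn]

theorem eq_choose (hn : 1 ≤ n) {i : ℕ} (hi : i ≤ n) :
    cCoef n i = 2 * (3 / (8 * n * (2 * n + 1)) * (2 * n + 1).choose (2 * i + 1) +
      3 / (8 * n * (2 * n - 1)) * ((2 * n).choose (2 * i) - (2 * n).choose (2 * i + 1))) := by
  have hn' : (1 : ℝ) ≤ n := by exact_mod_cast hn
  have h₁ : 2 * (n : ℝ) - 1 ≠ 0 := by linarith
  rcases hi.eq_or_lt with rfl | hi
  · rw [cCoef, if_pos rfl, Nat.choose_self, Nat.choose_self,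
      Nat.choose_eq_zero_of_lt (Nat.lt_succ_self _)]
    field_simp
    ring
  have hup : ((2 * n).choose (2 * i + 1) : ℝ) * (2 * n + 1) =
      (2 * n + 1).choose (2 * i + 1) * (2 * (n - i : ℕ)) := by
    have := Nat.choose_mul_succ_eq (2 * n) (2 * i + 1)
    rw [show 2 * n + 1 - (2 * i + 1) = 2 * (n - i) by omega] at this
    exact_mod_cast this
  have hleft : ((2 * n).choose (2 * i + 1) : ℝ) * (2 * i + 1) =
      (2 * n).choose (2 * i) * (2 * (n - i : ℕ)) := by
    have := Nat.choose_succ_right_eq (2 * n) (2 * i)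
    rw [show 2 * n - 2 * i = 2 * (n - i) by omega] at this
    exact_mod_cast this
  rw [Nat.cast_sub hi.le] at hup hleft
  have hd : (n : ℝ) - i ≠ 0 := sub_ne_zero.2 (by exact_mod_cast hi.ne')
  rw [cCoef, if_neg hi.ne]
  -- an opaque `d` keeps `field_simp` from renormalising `2n - 1` out of reach of `h₁`
  generalize hdn : 2 * (n : ℝ) - 1 = d at h₁ ⊢
  field_simp
  linear_combination 2 * (d * hup + (2 * n + 1) * hleft +
    (2 * n + 1) * ((2 * n).choose (2 * i + 1) : ℝ) * hdn)

theorem sum_mul_pow_mul_pow (hn : 1 ≤ n) (x q : ℝ) :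
    ∑ i ∈ range (n + 1), cCoef n i * (x ^ (2 * i + 1) * q ^ (2 * (n - i))) =
      3 / (8 * n * (2 * n + 1)) * ((q + x) ^ (2 * n + 1) - (q - x) ^ (2 * n + 1)) +
      3 / (8 * n * (2 * n - 1)) * ((q - x) ^ (2 * n) * (q + x) - (q - x) * (q + x) ^ (2 * n)) := by
  have hmixed : (q - x) ^ (2 * n) * (q + x) - (q - x) * (q + x) ^ (2 * n) =
      x * ((q + x) ^ (2 * n) + (q - x) ^ (2 * n)) - q * ((q + x) ^ (2 * n) - (q - x) ^ (2 * n)) := by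
    ring
  rw [hmixed, add_pow_sub_sub_pow x q le_rfl, add_pow_add_sub_pow x q (Nat.le_succ _),
    add_pow_sub_sub_pow x q (Nat.le_succ _)]
  simp only [mul_sum, ← sum_sub_distrib, ← sum_add_distrib]
  refine sum_congr rfl fun i hmem ↦ ?_
  have hi : i ≤ n := Nat.lt_succ_iff.mp (mem_range.mp hmem)
  -- the last odd coefficient `C(2n, 2n+1)` vanishes, so the truncated exponent is harmless
  have hodd : q * (q ^ (2 * n - (2 * i + 1)) * ((2 * n).choose (2 * i + 1) : ℝ)) =
      q ^ (2 * (n - i)) * (2 * n).choose (2 * i + 1) := by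
    rcases hi.lt_or_eq with hi | rfl
    · rw [← mul_assoc, ← pow_succ', show 2 * n - (2 * i + 1) + 1 = 2 * (n - i) by omega]
    · simp
  rw [show 2 * n + 1 - (2 * i + 1) = 2 * (n - i) by omega,
    show 2 * n - 2 * i = 2 * (n - i) by omega, eq_choose hn hi]
  linear_combination (3 / (8 * n * (2 * n - 1)) * 2 * x ^ (2 * i + 1) : ℝ) * hodd

theorem sum_phase_eq (hn : 1 ≤ n) (s r : ℝ) :
    ∑ i ∈ Icc 1 n, cCoef n i / 2 ^ (2 * n + 1) * (s - r) ^ (2 * i + 1) * (s + r) ^ (2 * (n - i)) =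
      3 / (8 * n * (2 * n + 1)) * (s ^ (2 * n + 1) - r ^ (2 * n + 1)) +
      3 / (8 * n * (2 * n - 1)) * (r ^ (2 * n) * s - r * s ^ (2 * n)) := by
  obtain ⟨x, q, rfl, rfl⟩ : ∃ x q : ℝ, s = q + x ∧ r = q - x :=
    ⟨(s - r) / 2, (s + r) / 2, by ring, by ring⟩
  rw [← sum_mul_pow_mul_pow hn, range_eq_Ico, sum_eq_sum_Ico_succ_bot (by omega : 0 < n + 1),
    zero_right (by omega), zero_mul, zero_add, Ico_add_one_right_eq_Icc]
  refine sum_congr rfl fun i hmem ↦ ?_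
  have hi := (mem_Icc.mp hmem).2
  rw [show q + x - (q - x) = 2 * x by ring, show q + x + (q - x) = 2 * q by ring, mul_pow, mul_pow,
    show 2 * n + 1 = 2 * i + 1 + 2 * (n - i) by omega, pow_add]
  field_simp

theorem sum_div_two_pow (hn : 1 ≤ n) :
    ∑ i ∈ Icc 1 n, cCoef n i / 2 ^ (2 * n + 1) = 3 / (8 * n * (2 * n + 1)) := by
  simpa [show n ≠ 0 by omega] using sum_phase_eq hn 1 0

theorem sum_div_two_pow_mul (hn : 1 ≤ n) :
    ∑ i ∈ Icc 1 n, cCoef n i / 2 ^ (2 * n + 1) * (4 * i - 2 * n + 1) =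
      3 / (8 * n * (2 * n - 1)) := by
  have hL : HasDerivAt
      (fun r ↦ ∑ i ∈ Icc 1 n,
        cCoef n i / 2 ^ (2 * n + 1) * (1 - r) ^ (2 * i + 1) * (1 + r) ^ (2 * (n - i)))
      (-∑ i ∈ Icc 1 n, cCoef n i / 2 ^ (2 * n + 1) * (4 * i - 2 * n + 1)) 0 := by
    simp only [mul_assoc]
    refine (HasDerivAt.fun_sum fun i _ ↦
      (hasDerivAt_one_sub_pow_mul_one_add_pow _ _).const_mul _).congr_deriv ?_
    rw [← sum_neg_distrib]
    refine sum_congr rfl fun i hi ↦ ?_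
    push_cast [Nat.cast_sub (mem_Icc.mp hi).2]
    ring
  have hR : HasDerivAt
      (fun r : ℝ ↦ 3 / (8 * n * (2 * n + 1)) * (1 ^ (2 * n + 1) - r ^ (2 * n + 1)) +
        3 / (8 * n * (2 * n - 1)) * (r ^ (2 * n) * 1 - r * 1 ^ (2 * n)))
      (-(3 / (8 * n * (2 * n - 1)))) 0 := by
    refine ((((hasDerivAt_pow (2 * n + 1) 0).const_sub _).const_mul _).add
      ((((hasDerivAt_pow (2 * n) 0).mul_const 1).sub
        ((hasDerivAt_id' 0).mul_const _)).const_mul _)).congr_deriv ?_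
    simp [show n ≠ 0 by omega, show 2 * n - 1 ≠ 0 by omega]
  exact neg_injective <| hL.unique <|
    hR.congr_of_eventuallyEq (.of_forall fun r ↦ sum_phase_eq hn 1 r)

end cCoef

/-- For every `n ≥ 1` and all reals `s, r`, the density written in phase variables
satisfies
`Σ_{i=1}^n (c_i/2^{2n+1})(s−r)^{2i+1}(s+r)^{2(n−i)}
  = (s^{2n+1} − r^{2n+1}) Σ c_i/2^{2n+1}
    + (r^{2n} s − r s^{2n}) Σ (c_i/2^{2n+1})(4i−2n+1)`. -/
theorem density_phase_variable_identity (n : ℕ) (hn : 1 ≤ n) (s r : ℝ) :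
    ∑ i ∈ Finset.Icc 1 n,
        (cCoef n i / 2 ^ (2 * n + 1)) * (s - r) ^ (2 * i + 1) * (s + r) ^ (2 * (n - i))
    = (s ^ (2 * n + 1) - r ^ (2 * n + 1)) *
        (∑ i ∈ Finset.Icc 1 n, cCoef n i / 2 ^ (2 * n + 1))
      + (r ^ (2 * n) * s - r * s ^ (2 * n)) *
        (∑ i ∈ Finset.Icc 1 n,
          (cCoef n i / 2 ^ (2 * n + 1)) * (4 * (i : ℝ) - 2 * (n : ℝ) + 1)) := by
  rw [cCoef.sum_phase_eq hn, cCoef.sum_div_two_pow hn, cCoef.sum_div_two_pow_mul hn]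
  ring
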